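/- Let C = √(9067/137). The set of (p,q,r,s) ∈ ℝ⁴ satisfying p − q/2 + 2p² + 2pq − 2q² = r − s/2 + 2r² + 2rs − 2s², −p + 5q + 3p² + 2pq − q² = −r + 5s + 3r² + 2rs − s², p² + q² = 1, r² + s² = 1 and (p,q) ≠ (r,s) is exactly the two-element set consisting of ( −11C/142 − 18/71, 99/142 − 2C/71, 11C/142 − 18/71, 2C/71 + 99/142 ) and its swap ( 11C/142 − 18/71, 2C/71 + 99/142, −11C/142 − 18/71, 99/142 − 2C/71 ). -/
import Mathlib


/-- The closing-equation system for `X = (-1/2 + 2x - 4y, -1 - 4x - 2y)`,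
`Y = (5 + 2x - 2y, 1 - 6x - 2y)`. -/
def closingSys19 (p q r s : ℝ) : Prop :=
  p - q / 2 + 2 * p ^ 2 + 2 * p * q - 2 * q ^ 2 =
      r - s / 2 + 2 * r ^ 2 + 2 * r * s - 2 * s ^ 2 ∧
    -p + 5 * q + 3 * p ^ 2 + 2 * p * q - q ^ 2 =
      -r + 5 * s + 3 * r ^ 2 + 2 * r * s - s ^ 2 ∧
    p ^ 2 + q ^ 2 = 1 ∧ r ^ 2 + s ^ 2 = 1 ∧ (p, q) ≠ (r, s)

/-- With `C = √(9067/137)`, the solution set of the closing equations is exactly the listed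
solution and its swap. -/
theorem closingSys19_solutions (C : ℝ) (hC : C = Real.sqrt (9067 / 137)) :
    {x : ℝ × ℝ × ℝ × ℝ | closingSys19 x.1 x.2.1 x.2.2.1 x.2.2.2} =
      {(-11 * C / 142 - 18 / 71, 99 / 142 - 2 * C / 71,
          11 * C / 142 - 18 / 71, 2 * C / 71 + 99 / 142),
       (11 * C / 142 - 18 / 71, 2 * C / 71 + 99 / 142,
          -11 * C / 142 - 18 / 71, 99 / 142 - 2 * C / 71)} := by
  have hCpos : 0 < C := by
    rw [hC]; exact Real.sqrt_pos.mpr (by norm_num)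
  have hC2 : C ^ 2 = 9067 / 137 := by
    rw [hC]; exact Real.sq_sqrt (by norm_num)
  ext ⟨p, q, r, s⟩
  simp only [Set.mem_setOf_eq, Set.mem_insert_iff, Set.mem_singleton_iff, Prod.mk.injEq,
    closingSys19]
  constructor
  · rintro ⟨h1, h2, h3, h4, hne⟩
    -- linear relation from h2 - h1 with circles
    have hL : 4 * p - 11 * q = 4 * r - 11 * s := by linarith
    have hqs : q - s ≠ 0 := by
      intro h
      exact hne (by rw [Prod.mk.injEq]; exact ⟨by linarith, by linarith⟩)
    have hpr : p - r = 11 / 4 * (q - s) := by linarith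
    have hA : (q - s) * (11 * (p + r) + 4 * (q + s)) = 0 := by
      linear_combination 4 * h3 - 4 * h4 - (p + r) * hL
    have hsum : 11 * (p + r) + 4 * (q + s) = 0 :=
      (mul_eq_zero.mp hA).resolve_left hqs
    -- E1 with substitutions gives q + s = 99/71
    have hB : (q - s) * (71 * (q + s) - 99) = 0 := by
      linear_combination (-(44:ℝ)) * h1 + 88 * h3 - 88 * h4 +
        (44 * (q + s) + 44) * hpr + (4 * (q - s)) * hsum
    have hsumq : q + s = 99 / 71 := by
      have := (mul_eq_zero.mp hB).resolve_left hqs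
      linarith
    have hsump : p + r = -36 / 71 := by linarith
    have hp : p = -18 / 71 + 11 * (q - s) / 8 := by linarith
    have hq : q = 99 / 142 + (q - s) / 2 := by linarith
    have hd2 : 5041 * (q - s) ^ 2 = 16 * C ^ 2 := by
      rw [hp] at h3
      linear_combination (322624 / 137) * h3 - 16 * hC2 -
        (322624 / 137) * (q + 99 / 142 + (q - s) / 2) * hq
    have hfac : (71 * (q - s) - 4 * C) * (71 * (q - s) + 4 * C) = 0 := by
      linear_combination hd2
    have hcases := mul_eq_zero.mp hfac
    clear hA hB hfac hd2 h1 h2 h3 h4 hne hC hL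
    rcases hcases with h | h
    · right
      exact ⟨by linarith, by linarith, by linarith, by linarith⟩
    · left
      exact ⟨by linarith, by linarith, by linarith, by linarith⟩
  · rintro (⟨hp, hq, hr, hs⟩ | ⟨hp, hq, hr, hs⟩) <;> subst hp hq hr hs <;>
      refine ⟨by ring, by ring, by linear_combination (137/20164) * hC2,
        by linear_combination (137/20164) * hC2, ?_⟩ <;>
      · intro h
        have h1 := congrArg Prod.fst h
        simp only at h1
        nlinarith [hCpos]
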